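/- For fixed y in (0,1] and r in (0,1], the function μ ↦ M_B(μ + r(y - μ), μ) is non-decreasing with respect to μ on the interval (0, y). -/

import Mathlib

/-- `M_B(z, θ) = z·ln(θ/z) + (1−z)·ln((1−θ)/(1−z))`.  Thanks to `Real.log 0 = 0`
and `0 * x = 0`, this formula also realizes the conventions
`M_B(0,θ) = ln(1−θ)` and `M_B(1,θ) = ln θ`. -/
noncomputable def MB (z θ : ℝ) : ℝ :=
  z * Real.log (θ / z) + (1 - z) * Real.log ((1 - θ) / (1 - z))

/-!
Write `f(μ) = M_B(z, μ)` with `z = μ + r(y − μ) = (1 − r)μ + ry`; the chain rule gives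
`f' = (1 − r) ∂_z M_B + ∂_θ M_B`. Here `∂_θ M_B = (z − θ)/(θ(1 − θ))` exactly, and
`log u ≥ 1 − 1/u` gives `∂_z M_B ≥ (θ − z)/(θ(1 − z))`. At `θ = μ < z` the two combine to
`f' ≥ r(1 − y)(z − μ)/(μ(1 − μ)(1 − z)) ≥ 0`. When `r = y = 1` the shift is constantly `1`
and `f = log`.
-/

open Real

noncomputable def dMBdz (z θ : ℝ) : ℝ :=
  log (θ / z) - log ((1 - θ) / (1 - z))

noncomputable def dMBdθ (z θ : ℝ) : ℝ :=
  z / θ - (1 - z) / (1 - θ)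

lemma MB_one_left (θ : ℝ) : MB 1 θ = log θ := by
  simp [MB]

lemma hasDerivAt_MB {z θ : ℝ → ℝ} {z' θ' t : ℝ} (hz : HasDerivAt z z' t)
    (hθ : HasDerivAt θ θ' t) (hz0 : z t ≠ 0) (hz1 : z t ≠ 1) (hθ0 : θ t ≠ 0)
    (hθ1 : θ t ≠ 1) :
    HasDerivAt (fun s => MB (z s) (θ s)) (z' * dMBdz (z t) (θ t) + θ' * dMBdθ (z t) (θ t)) t := by
  have h1z : 1 - z t ≠ 0 := sub_ne_zero.2 hz1.symm
  have h1θ : 1 - θ t ≠ 0 := sub_ne_zero.2 hθ1.symm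
  have hfirst : HasDerivAt (fun s => z s * log (θ s / z s))
      (z' * log (θ t / z t) + z t * ((θ' * z t - θ t * z') / z t ^ 2 / (θ t / z t))) t :=
    hz.mul ((hθ.div hz hz0).log (div_ne_zero hθ0 hz0))
  have hsecond : HasDerivAt (fun s => (1 - z s) * log ((1 - θ s) / (1 - z s)))
      (-z' * log ((1 - θ t) / (1 - z t)) + (1 - z t) *
        ((-θ' * (1 - z t) - (1 - θ t) * -z') / (1 - z t) ^ 2 / ((1 - θ t) / (1 - z t)))) t :=
    (hz.const_sub 1).mul (((hθ.const_sub 1).div (hz.const_sub 1) h1z).log (div_ne_zero h1θ h1z))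
  refine (hfirst.add hsecond).congr_deriv ?_
  rw [dMBdz, dMBdθ]
  field_simp
  ring

lemma dMBdθ_eq {z θ : ℝ} (hθ0 : θ ≠ 0) (hθ1 : θ ≠ 1) :
    dMBdθ z θ = (z - θ) / (θ * (1 - θ)) := by
  have h1θ : 1 - θ ≠ 0 := sub_ne_zero.2 hθ1.symm
  rw [dMBdθ]
  field_simp
  ring

lemma sub_div_le_dMBdz {z θ : ℝ} (hz0 : 0 < z) (hz1 : z < 1) (hθ0 : 0 < θ) (hθ1 : θ < 1) :
    (θ - z) / (θ * (1 - z)) ≤ dMBdz z θ := by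
  have h1z : 0 < 1 - z := by linarith
  have h1θ : 0 < 1 - θ := by linarith
  have hodds : dMBdz z θ = log (θ * (1 - z) / (z * (1 - θ))) := by
    rw [dMBdz, ← log_div (by positivity) (by positivity)]
    congr 1
    field_simp
  have hinv : 1 - (θ * (1 - z) / (z * (1 - θ)))⁻¹ = (θ - z) / (θ * (1 - z)) := by
    field_simp
    ring
  rw [hodds, ← hinv]
  exact one_sub_inv_le_log_of_pos (by positivity)

lemma hasDerivAt_MB_shift {y r μ : ℝ} (hμ0 : μ ≠ 0) (hμ1 : μ ≠ 1)
    (hz0 : μ + r * (y - μ) ≠ 0) (hz1 : μ + r * (y - μ) ≠ 1) :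
    HasDerivAt (fun t => MB (t + r * (y - t)) t)
      ((1 - r) * dMBdz (μ + r * (y - μ)) μ + dMBdθ (μ + r * (y - μ)) μ) μ := by
  have hshift : HasDerivAt (fun t => t + r * (y - t)) (1 - r) μ :=
    ((hasDerivAt_id' μ).add (((hasDerivAt_id' μ).const_sub y).const_mul r)).congr_deriv
      (by ring)
  simpa using hasDerivAt_MB hshift (hasDerivAt_id μ) hz0 hz1 hμ0 hμ1

lemma dMB_shift_nonneg {y r μ : ℝ} (hy1 : y ≤ 1) (hr0 : 0 ≤ r) (hr1 : r ≤ 1) (hμ0 : 0 < μ)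
    (hμy : μ ≤ y) (hz1 : μ + r * (y - μ) < 1) :
    0 ≤ (1 - r) * dMBdz (μ + r * (y - μ)) μ + dMBdθ (μ + r * (y - μ)) μ := by
  have hμz : μ ≤ μ + r * (y - μ) := by nlinarith
  have hgap : (1 - (μ + r * (y - μ))) - (1 - r) * (1 - μ) = r * (1 - y) := by ring
  generalize μ + r * (y - μ) = z at *
  have hμ1 : μ < 1 := by linarith
  have h1z : 0 < 1 - z := by linarith
  have h1μ : 0 < 1 - μ := by linarith
  calc 0 ≤ r * (1 - y) * (z - μ) / (μ * (1 - μ) * (1 - z)) :=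
        div_nonneg (mul_nonneg (mul_nonneg hr0 (by linarith)) (by linarith))
          (mul_pos (mul_pos hμ0 h1μ) h1z).le
    _ = (1 - r) * ((μ - z) / (μ * (1 - z))) + (z - μ) / (μ * (1 - μ)) := by
        rw [← hgap]
        field_simp
        ring
    _ ≤ (1 - r) * dMBdz z μ + dMBdθ z μ := by
        rw [dMBdθ_eq hμ0.ne' hμ1.ne]
        have hdz := sub_div_le_dMBdz (by linarith) hz1 hμ0 hμ1
        exact add_le_add_left (mul_le_mul_of_nonneg_left hdz (by linarith)) _

theorem mb_shift_monotone (y r : ℝ) (hy1 : y ≤ 1)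
    (hr0 : 0 < r) (hr1 : r ≤ 1) :
    MonotoneOn (fun μ : ℝ => MB (μ + r * (y - μ)) μ) (Set.Ioo 0 y) := by
  by_cases hdeg : r = 1 ∧ y = 1
  · obtain ⟨rfl, rfl⟩ := hdeg
    intro a ha b _ hab
    simpa [MB_one_left] using log_le_log ha.1 hab
  have hz1 : ∀ μ ∈ Set.Ioo 0 y, μ + r * (y - μ) < 1 := by
    intro μ ⟨_, hμy⟩
    rcases hr1.lt_or_eq with hr | rfl
    · nlinarith
    · have hy : y < 1 := hy1.lt_of_ne fun h => hdeg ⟨rfl, h⟩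
      linarith
  have hderiv : ∀ μ ∈ Set.Ioo 0 y, HasDerivAt (fun t => MB (t + r * (y - t)) t)
      ((1 - r) * dMBdz (μ + r * (y - μ)) μ + dMBdθ (μ + r * (y - μ)) μ) μ :=
    fun μ ⟨hμ0, hμy⟩ => hasDerivAt_MB_shift hμ0.ne' (hμy.trans_le hy1).ne
      (by nlinarith : 0 < μ + r * (y - μ)).ne' (hz1 μ ⟨hμ0, hμy⟩).ne
  refine monotoneOn_of_hasDerivWithinAt_nonneg (convex_Ioo 0 y)
    (f' := fun μ => (1 - r) * dMBdz (μ + r * (y - μ)) μ + dMBdθ (μ + r * (y - μ)) μ)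
    (fun μ hμ => (hderiv μ hμ).continuousAt.continuousWithinAt) (fun μ hμ => ?_) (fun μ hμ => ?_)
    <;> rw [interior_Ioo] at hμ
  · exact (hderiv μ hμ).hasDerivWithinAt
  · exact dMB_shift_nonneg hy1 hr0.le hr1 hμ.1 hμ.2.le (hz1 μ hμ)
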